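/- arXiv:2407.09133 — 3 statements merged into one kernel-verified Lean document; each statement's English description precedes it below -/
import Mathlib

section
/- Let φ : N_ℝ → ℝ be a convex function with sup_{n ∈ N_ℝ} |φ(n) − φ_P(n)| < ∞, and set R := max_{m ∈ P} ‖m‖. Then φ is Lipschitz continuous with Lipschitz constant R, i.e. |φ(n) − φ(n')| ≤ R · ‖n − n'‖ for all n, n' ∈ N_ℝ. -/
open scoped RealInnerProductSpace

/-- any `φ ∈ 𝒫(P)` is Lipschitz with constant
`R = max_{m ∈ P} ‖m‖`. -/
theorem stmt_5 (D : ℕ) (S : Finset (EuclideanSpace ℝ (Fin D)))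
    (P : Set (EuclideanSpace ℝ (Fin D)))
    (hP : P = convexHull ℝ (S : Set (EuclideanSpace ℝ (Fin D))))
    (hint : (interior P).Nonempty)
    (φP : EuclideanSpace ℝ (Fin D) → ℝ)
    (hφP : ∀ n, φP n = sSup ((fun m => ⟪m, -n⟫) '' P))
    (φ : EuclideanSpace ℝ (Fin D) → ℝ)
    (hconv : ConvexOn ℝ Set.univ φ)
    (hbdd : ∃ C : ℝ, ∀ n, |φ n - φP n| ≤ C)
    (R : ℝ) (hR : IsGreatest ((fun m => ‖m‖) '' P) R) :
    ∀ n n' : EuclideanSpace ℝ (Fin D), |φ n - φ n'| ≤ R * ‖n - n'‖ := by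
  obtain ⟨C, hC⟩ := hbdd
  have hCnonneg : 0 ≤ C := le_trans (abs_nonneg _) (hC 0)
  have hPne : P.Nonempty := hint.mono interior_subset
  have hRle : ∀ m ∈ P, ‖m‖ ≤ R := fun m hm => hR.2 ⟨m, hm, rfl⟩
  -- φP is R-Lipschitz (one-sided version)
  have hbddAbove : ∀ b : EuclideanSpace ℝ (Fin D),
      BddAbove ((fun m => ⟪m, -b⟫) '' P) := by
    intro b
    refine ⟨R * ‖b‖, ?_⟩
    rintro y ⟨m, hm, rfl⟩
    calc ⟪m, -b⟫ ≤ ‖m‖ * ‖-b‖ := real_inner_le_norm m (-b)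
    _ ≤ R * ‖b‖ := by
        rw [norm_neg]
        exact mul_le_mul_of_nonneg_right (hRle m hm) (norm_nonneg b)
  have hφPlip : ∀ a b : EuclideanSpace ℝ (Fin D),
      φP a ≤ φP b + R * ‖a - b‖ := by
    intro a b
    rw [hφP a]
    apply csSup_le (hPne.image _)
    rintro y ⟨m, hm, rfl⟩
    have h1 : ⟪m, -b⟫ ≤ φP b := by
      rw [hφP b]; exact le_csSup (hbddAbove b) ⟨m, hm, rfl⟩
    have h2 : ⟪m, -a⟫ = ⟪m, -b⟫ + ⟪m, b - a⟫ := by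
      rw [← inner_add_right]
      congr 1
      abel
    have h3 : ⟪m, b - a⟫ ≤ R * ‖a - b‖ := by
      calc ⟪m, b - a⟫ ≤ ‖m‖ * ‖b - a‖ := real_inner_le_norm m (b - a)
      _ ≤ R * ‖a - b‖ := by
          rw [norm_sub_rev]
          exact mul_le_mul_of_nonneg_right (hRle m hm) (norm_nonneg _)
    simp only []
    rw [h2]
    linarith
  -- key one-sided estimate
  have key : ∀ n n' : EuclideanSpace ℝ (Fin D),
      φ n - φ n' ≤ R * ‖n - n'‖ := by
    intro n n'
    set v := n - n' with hv
    have step : ∀ t : ℝ, 1 ≤ t → φ n - φ n' ≤ R * ‖v‖ + 2 * C / t := by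
      intro t ht
      have ht0 : 0 < t := lt_of_lt_of_le one_pos ht
      have hcomb : φ n ≤ (1 - 1 / t) * φ n' + (1 / t) * φ (n' + t • v) := by
        have ha : (0:ℝ) ≤ 1 - 1 / t := by
          rw [sub_nonneg]
          exact div_le_one_of_le₀ ht (le_of_lt ht0)
        have hb : (0:ℝ) < 1 / t := by positivity
        have hab : (1 - 1 / t) + 1 / t = 1 := by ring
        have := hconv.2 (Set.mem_univ n') (Set.mem_univ (n' + t • v))
          ha hb.le hab
        have heq : (1 - 1 / t) • n' + (1 / t) • (n' + t • v) = n := by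
          have : (1 / t) * t = 1 := by field_simp
          rw [smul_add, smul_smul, this, one_smul]
          rw [hv]
          module
        rwa [heq] at this
      have hq : φ n - φ n' ≤ (φ (n' + t • v) - φ n') / t := by
        have hinv : 1 / t * t = 1 := by field_simp
        rw [le_div_iff₀ ht0]
        have h := mul_le_mul_of_nonneg_right hcomb ht0.le
        have hexp : ((1 - 1 / t) * φ n' + 1 / t * φ (n' + t • v)) * t =
            φ n' * t - (1 / t * t) * φ n' + (1 / t * t) * φ (n' + t • v) := by
          ring
        rw [hexp, hinv] at h
        linarith
      have h1 : φ (n' + t • v) ≤ φP (n' + t • v) + C := by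
        have := abs_le.mp (hC (n' + t • v)); linarith [this.2]
      have h2 : φP n' - C ≤ φ n' := by
        have := abs_le.mp (hC n'); linarith [this.1]
      have h3 : φP (n' + t • v) ≤ φP n' + R * (t * ‖v‖) := by
        have := hφPlip (n' + t • v) n'
        have heq : ‖(n' + t • v) - n'‖ = t * ‖v‖ := by
          rw [add_sub_cancel_left, norm_smul, Real.norm_eq_abs,
            abs_of_pos ht0]
        rwa [heq] at this
      calc φ n - φ n' ≤ (φ (n' + t • v) - φ n') / t := hq
      _ ≤ (R * (t * ‖v‖) + 2 * C) / t := by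
          gcongr
          linarith
      _ = R * ‖v‖ + 2 * C / t := by field_simp
    refine le_of_forall_pos_le_add fun ε hε => ?_
    have ht : (1:ℝ) ≤ max 1 (2 * C / ε) := le_max_left _ _
    have ht0 : (0:ℝ) < max 1 (2 * C / ε) := lt_of_lt_of_le one_pos ht
    have h2 : 2 * C / max 1 (2 * C / ε) ≤ ε := by
      rw [div_le_iff₀ ht0]
      calc 2 * C = (2 * C / ε) * ε := by field_simp
      _ ≤ max 1 (2 * C / ε) * ε :=
          mul_le_mul_of_nonneg_right (le_max_right _ _) hε.le
      _ = ε * max 1 (2 * C / ε) := by ring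
    linarith [step _ ht]
  intro n n'
  rw [abs_sub_le_iff]
  constructor
  · exact key n n'
  · have := key n' n
    rwa [norm_sub_rev] at this
end

section
/- Let K ⊂ ℝ^D be a nonempty compact convex set, let g_1, …, g_r : ℝ^D → ℝ be affine functions with g_i(y) ≥ 0 for all y ∈ K and all i, and let x ∈ K satisfy g_i(x) = 0 for all i = 1, …, r. Then there exists an exposed face F of K (in the sense of Mathlib's IsExposed: F = K or F is the set of maximizers over K of some continuous linear functional) such that x ∈ F and g_i vanishes identically on F for every i = 1, …, r. -/
open scoped RealInnerProductSpace

section ExposedZeroSet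

variable {𝕜 E : Type*} [Field 𝕜] [LinearOrder 𝕜] [IsStrictOrderedRing 𝕜] [TopologicalSpace 𝕜]
  [IsTopologicalAddGroup 𝕜]
  [AddCommGroup E] [TopologicalSpace E] [Module 𝕜 E] {K : Set E}

/-- Where `c + φ` vanishes on `K` it attains its minimum `0`, so `-φ` is maximal there. -/
theorem isExposed_setOf_add_eq_zero (c : 𝕜) (φ : StrongDual 𝕜 E)
    (hnonneg : ∀ y ∈ K, 0 ≤ c + φ y) : IsExposed 𝕜 K {y ∈ K | c + φ y = 0} := by
  rintro ⟨y₀, hy₀K, hy₀⟩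
  refine ⟨-φ, Set.ext fun y => ⟨fun ⟨hyK, hy⟩ => ⟨hyK, fun z hzK => ?_⟩,
    fun ⟨hyK, hmax⟩ => ⟨hyK, ?_⟩⟩⟩
  · have := hnonneg z hzK
    simp only [neg_apply]
    linarith
  · have hle : -φ y₀ ≤ -φ y := hmax y₀ hy₀K
    have := hnonneg y hyK
    linarith

/-- The common zero set of nonnegative affine functions is the zero set of their sum. -/
theorem isExposed_setOf_forall_add_eq_zero {ι : Type*} [Fintype ι] (c : ι → 𝕜)
    (φ : ι → StrongDual 𝕜 E) (hnonneg : ∀ i, ∀ y ∈ K, 0 ≤ c i + φ i y) :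
    IsExposed 𝕜 K {y ∈ K | ∀ i, c i + φ i y = 0} := by
  have hsum : ∀ y, ∑ i, c i + (∑ i, φ i) y = ∑ i, (c i + φ i y) := fun y => by
    rw [sum_apply, Finset.sum_add_distrib]
  have hzero : {y ∈ K | ∀ i, c i + φ i y = 0} = {y ∈ K | ∑ i, c i + (∑ i, φ i) y = 0} := by
    ext y
    refine and_congr_right fun hyK => ?_
    rw [hsum, Finset.sum_eq_zero_iff_of_nonneg fun i _ => hnonneg i y hyK]
    simp
  rw [hzero]
  exact isExposed_setOf_add_eq_zero _ _ fun y hyK => by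
    rw [hsum]
    exact Finset.sum_nonneg fun i _ => hnonneg i y hyK

end ExposedZeroSet

theorem stmt_6_general (D r : ℕ) (K : Set (EuclideanSpace ℝ (Fin D)))
    (g : Fin r → EuclideanSpace ℝ (Fin D) → ℝ)
    (haff : ∀ i, ∃ (c : ℝ) (l : EuclideanSpace ℝ (Fin D)),
      ∀ y, g i y = c + ⟪l, y⟫)
    (hnonneg : ∀ i, ∀ y ∈ K, 0 ≤ g i y)
    (x : EuclideanSpace ℝ (Fin D)) (hx : x ∈ K)
    (hxzero : ∀ i, g i x = 0) :
    ∃ F : Set (EuclideanSpace ℝ (Fin D)),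
      IsExposed ℝ K F ∧ x ∈ F ∧ ∀ i, ∀ y ∈ F, g i y = 0 := by
  choose c l hg using haff
  have hg_inner : ∀ i y, g i y = c i + innerSL ℝ (l i) y := fun i y => by
    rw [innerSL_apply_apply, hg]
  simp only [hg_inner] at hnonneg hxzero ⊢
  exact ⟨_, isExposed_setOf_forall_add_eq_zero c _ hnonneg, ⟨hx, hxzero⟩, fun i _ hy => hy.2 i⟩

/-- if finitely many affine functions `g i` are nonnegative on a
nonempty compact convex set `K` and all vanish at a point `x ∈ K`, then there
is an exposed face `F` of `K` containing `x` on which all the `g i` vanish. -/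
theorem stmt_6 (D r : ℕ) (K : Set (EuclideanSpace ℝ (Fin D)))
    (hKne : K.Nonempty) (hKcpt : IsCompact K) (hKconv : Convex ℝ K)
    (g : Fin r → EuclideanSpace ℝ (Fin D) → ℝ)
    (haff : ∀ i, ∃ (c : ℝ) (l : EuclideanSpace ℝ (Fin D)),
      ∀ y, g i y = c + ⟪l, y⟫)
    (hnonneg : ∀ i, ∀ y ∈ K, 0 ≤ g i y)
    (x : EuclideanSpace ℝ (Fin D)) (hx : x ∈ K)
    (hxzero : ∀ i, g i x = 0) :
    ∃ F : Set (EuclideanSpace ℝ (Fin D)),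
      IsExposed ℝ K F ∧ x ∈ F ∧ ∀ i, ∀ y ∈ F, g i y = 0 :=
  stmt_6_general D r K g haff hnonneg x hx hxzero
end

section
/- Let m ∈ M_ℝ. Then m ∈ A_h if and only if m ∈ Δ_h and for every i = 1, …, r there exists n ∈ S_i with h(n) + ⟨m, n⟩ = 0. In other words, the union of those exposed faces G of Δ_h with N_i(G) ≠ ∅ for all i coincides with the set { m ∈ Δ_h : ∀ i, ∃ n ∈ S_i, h(n) + ⟨m, n⟩ = 0 }. -/
open scoped RealInnerProductSpace

/-! The common zero set in `Δ_h` of finitely many supporting conditions `h(n) + ⟪·, n⟫ ≥ 0` is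
exposed by the single functional `-⟪·, ∑ n⟫`: a point of `Δ_h` maximizes it exactly when each
summand `h(n) + ⟪·, n⟫`, being nonnegative on `Δ_h`, vanishes. So every point `m` of `Δ_h`
satisfying the conditions lies on the exposed face they cut out, which witnesses `m ∈ A_h`. -/

theorem IsExposed.setOf_forall_eq_of_le {𝕜 E ι : Type*} [TopologicalSpace 𝕜] [Ring 𝕜]
    [PartialOrder 𝕜] [IsOrderedRing 𝕜] [ContinuousAdd 𝕜] [AddCommMonoid E] [TopologicalSpace E]
    [Module 𝕜 E] [Fintype ι] {A : Set E} (l : ι → StrongDual 𝕜 E) (c : ι → 𝕜)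
    (hA : ∀ i, ∀ x ∈ A, l i x ≤ c i) :
    IsExposed 𝕜 A {x ∈ A | ∀ i, l i x = c i} := by
  rintro ⟨x₀, hx₀A, hx₀⟩
  refine ⟨∑ i, l i, Set.ext fun x => and_congr_right fun hx => ?_⟩
  simp only [FunLike.coe_sum, Finset.sum_apply]
  have hsum_le : ∀ y ∈ A, ∑ i, l i y ≤ ∑ i, c i := fun y hy =>
    Finset.sum_le_sum fun i _ => hA i y hy
  constructor
  · intro hxc y hy
    simpa only [hxc] using hsum_le y hy
  · intro hmax i
    have hsum : ∑ i, l i x = ∑ i, c i :=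
      (hsum_le x hx).antisymm (by simpa only [hx₀] using hmax x₀ hx₀A)
    exact (Finset.sum_eq_sum_iff_of_le fun i _ => hA i x hx).mp hsum i (Finset.mem_univ i)

theorem stmt_7_general (D r : ℕ) (h : EuclideanSpace ℝ (Fin D) → ℝ)
    (Δ : Set (EuclideanSpace ℝ (Fin D)))
    (hΔ : Δ = {m | ∀ n, ⟪m, n⟫ ≥ -h n})
    (S : Fin r → Finset (EuclideanSpace ℝ (Fin D)))
    (A : Set (EuclideanSpace ℝ (Fin D)))
    (hA : A = ⋃₀ {G | IsExposed ℝ Δ G ∧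
      ∀ i, ∃ n ∈ S i, ∀ m ∈ G, h n + ⟪m, n⟫ = 0}) :
    ∀ m, m ∈ A ↔ m ∈ Δ ∧ ∀ i, ∃ n ∈ S i, h n + ⟪m, n⟫ = 0 := by
  intro m
  subst hA
  constructor
  · rintro ⟨G, ⟨hGexp, hG⟩, hmG⟩
    exact ⟨hGexp.subset hmG, fun i => (hG i).imp fun n hn => ⟨hn.1, hn.2 m hmG⟩⟩
  · rintro ⟨hmΔ, hm⟩
    choose w hwS hwm using hm
    have hsupp : ∀ n, ∀ x ∈ Δ, innerSL ℝ (-n) x ≤ h n := fun n x hx => by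
      rw [hΔ] at hx
      rw [innerSL_apply_apply, inner_neg_left, real_inner_comm]
      linarith [hx n]
    have hface : ∀ n x, innerSL ℝ (-n) x = h n ↔ h n + ⟪x, n⟫ = 0 := fun n x => by
      rw [innerSL_apply_apply, inner_neg_left, real_inner_comm]
      constructor <;> intro hx <;> linarith
    refine ⟨{x ∈ Δ | ∀ i, innerSL ℝ (-w i) x = h (w i)},
      ⟨IsExposed.setOf_forall_eq_of_le _ _ fun i => hsupp (w i),
        fun i => ⟨w i, hwS i, fun x hx => (hface _ x).mp (hx.2 i)⟩⟩,
      hmΔ, fun i => (hface _ m).mpr (hwm i)⟩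

/-- pointwise description of the tropical sphere of Haase–Zharkov:
`m ∈ A_h` iff `m ∈ Δ_h` and for each `i` there is `n ∈ S_i` with
`h(n) + ⟪m, n⟫ = 0`. -/
theorem stmt_7 (D r : ℕ) (h : EuclideanSpace ℝ (Fin D) → ℝ)
    (Δ : Set (EuclideanSpace ℝ (Fin D)))
    (hΔ : Δ = {m | ∀ n, ⟪m, n⟫ ≥ -h n})
    (hne : Δ.Nonempty) (hcpt : IsCompact Δ)
    (S : Fin r → Finset (EuclideanSpace ℝ (Fin D)))
    (hS : ∀ i, (0 : EuclideanSpace ℝ (Fin D)) ∉ S i)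
    (A : Set (EuclideanSpace ℝ (Fin D)))
    (hA : A = ⋃₀ {G | IsExposed ℝ Δ G ∧
      ∀ i, ∃ n ∈ S i, ∀ m ∈ G, h n + ⟪m, n⟫ = 0}) :
    ∀ m, m ∈ A ↔ m ∈ Δ ∧ ∀ i, ∃ n ∈ S i, h n + ⟪m, n⟫ = 0 :=
  stmt_7_general D r h Δ hΔ S A hA
end
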